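/- arXiv:1105.0178 — 2 statements merged into one kernel-verified Lean document; each statement's English description precedes it below -/
import Mathlib

section
/- For every nonnegative integer n, ∑_{k=0}^{n} H_k³ = (n+1)·H_n³ − (3/2)(2n+1)·H_n² + 3(2n+1)·H_n + (1/2)·H_n^{(2)} − 6n. -/
def harmonic' (n : ℕ) : ℚ := ∑ j ∈ Finset.Icc 1 n, (1 / j : ℚ)

def harmonic2 (n : ℕ) : ℚ := ∑ j ∈ Finset.Icc 1 n, (1 / (j : ℚ) ^ 2)

lemma harmonic'_succ (n : ℕ) : harmonic' (n + 1) = harmonic' n + 1 / ((n : ℚ) + 1) := by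
  rw [harmonic', Finset.sum_Icc_succ_top (by omega), ← harmonic']
  push_cast
  rfl

lemma harmonic2_succ (n : ℕ) : harmonic2 (n + 1) = harmonic2 n + 1 / ((n : ℚ) + 1) ^ 2 := by
  rw [harmonic2, Finset.sum_Icc_succ_top (by omega), ← harmonic2]
  push_cast
  rfl

theorem stmt_8 (n : ℕ) :
    ∑ k ∈ Finset.range (n + 1), harmonic' k ^ 3
      = (n + 1) * harmonic' n ^ 3 - (3 / 2) * (2 * n + 1) * harmonic' n ^ 2
        + 3 * (2 * n + 1) * harmonic' n + (1 / 2) * harmonic2 n - 6 * n := by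
  induction n with
  | zero => simp [harmonic', harmonic2]
  | succ n ih =>
    have hn : (n : ℚ) + 1 ≠ 0 := by positivity
    rw [Finset.sum_range_succ, ih, harmonic'_succ, harmonic2_succ]
    push_cast
    field_simp
    ring
end

section
/- For every nonnegative integer n, ∑_{k=0}^{n} C(n,k)²·H_k = (2H_n − H_{2n})·C(2n,n). -/
open Finset

theorem harmonic'_eq_harmonic : harmonic' = harmonic := by
  ext n
  simp only [harmonic', harmonic_eq_sum_Icc, one_div]

theorem add_one_mul_cast_choose_succ (n k : ℕ) :
    ((k : ℚ) + 1) * n.choose (k + 1) = (n - k) * n.choose k := by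
  rcases le_or_gt k n with hk | hk
  · have h := Nat.choose_succ_right_eq n k
    rw [← Nat.cast_inj (R := ℚ)] at h
    push_cast [hk] at h
    linarith
  · simp [Nat.choose_eq_zero_of_lt hk, Nat.choose_eq_zero_of_lt (Nat.lt_succ_of_lt hk)]

/-- `-(n + 1) (3n + 3 - 2k) C(n, k - 1)²`, split on `k` to avoid truncated subtraction. -/
def chooseSqAntidiff (n : ℕ) : ℕ → ℚ
  | 0 => 0
  | k + 1 => -((n : ℚ) + 1) * (3 * n + 1 - 2 * k) * (n.choose k : ℚ) ^ 2

def harmonicAntidiff (n k : ℕ) : ℚ :=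
  chooseSqAntidiff n k * harmonic k + 3 * k * (n.choose k : ℚ) ^ 2

theorem chooseSqAntidiff_succ_sub (n k : ℕ) :
    chooseSqAntidiff n (k + 1) - chooseSqAntidiff n k
      = ((n : ℚ) + 1) ^ 2 * ((n + 1).choose k : ℚ) ^ 2
        - (2 * n + 1) * (2 * n + 2) * (n.choose k : ℚ) ^ 2 := by
  cases k with
  | zero => simp [chooseSqAntidiff]; ring
  | succ j =>
    have h := add_one_mul_cast_choose_succ n j
    simp only [chooseSqAntidiff, Nat.choose_succ_succ, Nat.cast_add, Nat.cast_succ]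
    linear_combination (2 * ((n : ℚ) + 1) * (n.choose (j + 1) - n.choose j)) * h

theorem neg_chooseSqAntidiff_succ_div (n k : ℕ) :
    -chooseSqAntidiff n (k + 1) / ((k : ℚ) + 1)
      = (4 * n + 1) * (n.choose k : ℚ) ^ 2
        + 3 * (k + 1) * (n.choose (k + 1) : ℚ) ^ 2 - 3 * k * (n.choose k : ℚ) ^ 2 := by
  have h := add_one_mul_cast_choose_succ n k
  rw [div_eq_iff (by positivity), chooseSqAntidiff]
  linear_combination (-3 * (((k : ℚ) + 1) * n.choose (k + 1) + (n - k) * n.choose k)) * h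

theorem harmonicAntidiff_succ_sub (n k : ℕ) :
    harmonicAntidiff n (k + 1) - harmonicAntidiff n k + (4 * n + 1) * (n.choose k : ℚ) ^ 2
      = ((n : ℚ) + 1) ^ 2 * (((n + 1).choose k : ℚ) ^ 2 * harmonic k)
        - (2 * n + 1) * (2 * n + 2) * ((n.choose k : ℚ) ^ 2 * harmonic k) := by
  simp only [harmonicAntidiff, harmonic_succ]
  push_cast
  linear_combination harmonic k * chooseSqAntidiff_succ_sub n k - neg_chooseSqAntidiff_succ_div n k

theorem sum_choose_sq_mul_harmonic_recurrence (n : ℕ) :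
    ((n : ℚ) + 1) ^ 2 * ∑ k ∈ range (n + 1 + 1), ((n + 1).choose k : ℚ) ^ 2 * harmonic k
      - (2 * n + 1) * (2 * n + 2) * ∑ k ∈ range (n + 1), (n.choose k : ℚ) ^ 2 * harmonic k
      = (4 * n + 1) * (2 * n).choose n := by
  have hn : n.choose (n + 1) = 0 := Nat.choose_eq_zero_of_lt n.lt_succ_self
  have hbottom : harmonicAntidiff n 0 = 0 := by simp [harmonicAntidiff, chooseSqAntidiff]
  have htop : harmonicAntidiff n (n + 1 + 1) = 0 := by
    simp [harmonicAntidiff, chooseSqAntidiff, Nat.choose_eq_zero_of_lt (by omega : n < n + 2)]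
  have hsq : ∑ k ∈ range (n + 1 + 1), (n.choose k : ℚ) ^ 2 = (2 * n).choose n := by
    rw [sum_range_succ, hn]
    exact_mod_cast by simpa using Nat.sum_range_choose_sq n
  have hext : ∑ k ∈ range (n + 1), (n.choose k : ℚ) ^ 2 * harmonic k
      = ∑ k ∈ range (n + 1 + 1), (n.choose k : ℚ) ^ 2 * harmonic k := by
    simp [sum_range_succ _ (n + 1)]
  calc _ = ∑ k ∈ range (n + 1 + 1), (harmonicAntidiff n (k + 1) - harmonicAntidiff n k
          + (4 * n + 1) * (n.choose k : ℚ) ^ 2) := by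
        rw [hext, mul_sum, mul_sum, ← sum_sub_distrib]
        exact sum_congr rfl fun k _ => (harmonicAntidiff_succ_sub n k).symm
    _ = (4 * n + 1) * ((2 * n).choose n : ℚ) := by
        rw [sum_add_distrib, sum_range_sub, htop, hbottom, ← mul_sum, hsq, sub_zero, zero_add]

theorem two_mul_harmonic_sub_harmonic_two_mul_recurrence (n : ℕ) :
    ((n : ℚ) + 1) ^ 2
        * ((2 * harmonic (n + 1) - harmonic (2 * (n + 1))) * (2 * (n + 1)).choose (n + 1))
      - (2 * n + 1) * (2 * n + 2) * ((2 * harmonic n - harmonic (2 * n)) * (2 * n).choose n)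
      = (4 * n + 1) * (2 * n).choose n := by
  have hc : ((2 * (n + 1)).choose (n + 1) : ℚ)
      = 2 * (2 * n + 1) * (2 * n).choose n / (n + 1) := by
    rw [eq_div_iff (by positivity), mul_comm]
    exact_mod_cast Nat.succ_mul_centralBinom_succ n
  have hH : harmonic (2 * (n + 1)) = harmonic (2 * n) + 1 / (2 * n + 1) + 1 / (2 * n + 2) := by
    rw [show 2 * (n + 1) = 2 * n + 1 + 1 by ring, harmonic_succ, harmonic_succ]
    push_cast
    ring
  rw [hc, hH, harmonic_succ]
  push_cast
  field_simp
  ring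

theorem stmt_10 (n : ℕ) :
    ∑ k ∈ Finset.range (n + 1), ((Nat.choose n k : ℚ)) ^ 2 * harmonic' k
      = (2 * harmonic' n - harmonic' (2 * n)) * (Nat.choose (2 * n) n) := by
  rw [harmonic'_eq_harmonic]
  induction n with
  | zero => simp
  | succ n ih =>
    have h := (sum_choose_sq_mul_harmonic_recurrence n).trans
      (two_mul_harmonic_sub_harmonic_two_mul_recurrence n).symm
    rw [ih, sub_left_inj] at h
    exact mul_left_cancel₀ (by positivity) h
end
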